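/- The one-way LOCC decoupling works: applying the quantum Fourier transform to the qudit in the state ψ' = Σᵢ cᵢ|i⟩⊗|underline(2^{d-i})⟩, then measuring the qudit in the standard basis with outcome m, and applying the correction unitary U_D^{(m)} = Σⱼ e^{-2πi jm/d}|underline(2^{d-j})⟩⟨underline(2^{d-j})| to the qubits, yields the post-measurement qubit state Σᵢ cᵢ|underline(2^{d-i})⟩ for every outcome m, each occurring with probability 1/d. -/

import Mathlib

open scoped BigOperators

/-- The `d`-qubit configuration `|2^{d-j}⟩` with a single `1` in position `j`. -/
def bitv (d : ℕ) (j : Fin d) : Fin d → Fin 2 := fun t => if t = j then 1 else 0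

/-- The coefficients of `(QFT ⊗ 1) ψ'` for `ψ' = ∑ⱼ cⱼ|j⟩⊗|2^{d-j}⟩`:
`Φ m f = (1/√d) ∑ⱼ e^{2πi jm/d} ⟨f|2^{d-j}⟩ cⱼ` is the (unnormalized) qubit
amplitude conditioned on qudit measurement outcome `m`. -/
noncomputable def Phi (d : ℕ) (c : Fin d → ℂ) (m : Fin d) (f : Fin d → Fin 2) : ℂ :=
  (1 / (Real.sqrt d : ℂ)) * ∑ j : Fin d,
    Complex.exp (2 * (Real.pi : ℂ) * Complex.I * (j : ℕ) * (m : ℕ) / d) *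
      (if f = bitv d j then c j else 0)

/-- The correction unitary `U_D^{(m)} = ∑ⱼ e^{-2πi jm/d}|2^{d-j}⟩⟨2^{d-j}|`. -/
noncomputable def UDm (d : ℕ) (m : Fin d) :
    Matrix (Fin d → Fin 2) (Fin d → Fin 2) ℂ := fun f f' =>
  if f = f' then
    ∑ j : Fin d,
      if f = bitv d j then Complex.exp (-(2 * (Real.pi : ℂ) * Complex.I * (j : ℕ) * (m : ℕ) / d))
      else 0
  else 0

/-
Each basis vector `|2^{d-j}⟩` occurs in `ψ'` paired with exactly one qudit value `j`,
so conditioning on the QFT outcome `m` leaves the qubits in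
`(1/√d) ∑ⱼ e^{2πi jm/d} cⱼ |2^{d-j}⟩`. The phases have modulus one, which gives the
probability `1/d`, and `U_D^{(m)}` multiplies each term by the conjugate phase.
-/

open Complex Finset Function

section IndicatorSums

variable {ι κ M : Type*} [Fintype ι] [DecidableEq κ] [AddCommMonoid M] {e : ι → κ}

lemma sum_ite_apply_eq_of_injective (he : Injective e) (g : ι → M) (j : ι) :
    ∑ i, (if e j = e i then g i else 0) = g j := by
  classical
  simp only [he.eq_iff, Finset.sum_ite_eq, mem_univ, if_true]

lemma sum_ite_eq_zero_of_notMem_range {x : κ} (hx : x ∉ Set.range e) (g : ι → M) :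
    ∑ i, (if x = e i then g i else 0) = 0 :=
  sum_eq_zero fun i _ => if_neg fun h => hx ⟨i, h.symm⟩

end IndicatorSums

lemma norm_exp_two_pi_I_mul_div (a b n : ℕ) :
    ‖exp (2 * (Real.pi : ℂ) * I * a * b / n)‖ = 1 := by
  simpa [mul_comm, mul_left_comm, div_eq_mul_inv] using
    norm_exp_ofReal_mul_I (2 * Real.pi * a * b / n)

lemma bitv_injective (d : ℕ) : Injective (bitv d) := by
  intro a b h
  by_contra hne
  simpa [bitv, hne] using congrFun h a

section Amplitudes

variable {d : ℕ} (c : Fin d → ℂ) (m : Fin d)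

lemma Phi_bitv (j : Fin d) :
    Phi d c m (bitv d j) =
      (Real.sqrt d : ℂ)⁻¹ * (exp (2 * (Real.pi : ℂ) * I * (j : ℕ) * (m : ℕ) / d) * c j) := by
  simp_rw [Phi, mul_ite, mul_zero, sum_ite_apply_eq_of_injective (bitv_injective d), one_div]

lemma Phi_of_notMem_range {f : Fin d → Fin 2} (hf : f ∉ Set.range (bitv d)) :
    Phi d c m f = 0 := by
  simp_rw [Phi, mul_ite, mul_zero, sum_ite_eq_zero_of_notMem_range hf, mul_zero]

lemma norm_Phi_bitv_sq (j : Fin d) :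
    ‖Phi d c m (bitv d j)‖ ^ 2 = ‖c j‖ ^ 2 / d := by
  rw [Phi_bitv, norm_mul, norm_mul, norm_exp_two_pi_I_mul_div, norm_inv, norm_real,
    Real.norm_of_nonneg (Real.sqrt_nonneg _), one_mul, mul_pow, inv_pow,
    Real.sq_sqrt (Nat.cast_nonneg d), inv_mul_eq_div]

lemma sum_norm_Phi_sq : ∑ f, ‖Phi d c m f‖ ^ 2 = (∑ j, ‖c j‖ ^ 2) / d := by
  rw [sum_div, eq_comm]
  exact Fintype.sum_of_injective _ (bitv_injective d) _ _
    (fun f hf => by rw [Phi_of_notMem_range c m hf, norm_zero, sq, mul_zero])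
    (fun j => (norm_Phi_bitv_sq c m j).symm)

end Amplitudes

lemma UDm_eq_diagonal (d : ℕ) (m : Fin d) :
    UDm d m = Matrix.diagonal fun f => ∑ j : Fin d,
      if f = bitv d j then exp (-(2 * (Real.pi : ℂ) * I * (j : ℕ) * (m : ℕ) / d)) else 0 := by
  ext f f'
  rw [UDm, Matrix.diagonal_apply]

theorem stmt_16_general (d : ℕ) (c : Fin d → ℂ)
    (hnorm : ∑ i : Fin d, ‖c i‖ ^ 2 = 1) (m : Fin d) :
    (∑ f : Fin d → Fin 2, ‖Phi d c m f‖ ^ 2) = 1 / d ∧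
    (UDm d m).mulVec (fun f => (Real.sqrt d : ℂ) * Phi d c m f) =
      fun f => ∑ i : Fin d, if f = bitv d i then c i else 0 := by
  refine ⟨by rw [sum_norm_Phi_sq, hnorm], funext fun f => ?_⟩
  have hsqrt : (Real.sqrt d : ℂ) ≠ 0 :=
    ofReal_ne_zero.mpr (Real.sqrt_pos.mpr (Nat.cast_pos.mpr m.pos)).ne'
  rw [UDm_eq_diagonal, Matrix.mulVec_diagonal]
  by_cases hf : f ∈ Set.range (bitv d)
  · obtain ⟨j, rfl⟩ := hf
    simp_rw [sum_ite_apply_eq_of_injective (bitv_injective d), Phi_bitv,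
      mul_inv_cancel_left₀ hsqrt, ← mul_assoc, ← exp_add, neg_add_cancel, exp_zero, one_mul]
  · simp only [Phi_of_notMem_range c m hf, sum_ite_eq_zero_of_notMem_range hf, mul_zero]

/-- The one-way LOCC decoupling works: measuring the qudit of `(QFT ⊗ 1)ψ'` in the
standard basis yields each outcome `m` with probability `1/d`, and after the
correction `U_D^{(m)}` the normalized post-measurement qubit state is
`∑ᵢ cᵢ|2^{d-i}⟩` for every outcome `m`. -/
theorem stmt_16 (d : ℕ) (hd : 0 < d) (c : Fin d → ℂ)
    (hnorm : ∑ i : Fin d, ‖c i‖ ^ 2 = 1) (m : Fin d) :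
    (∑ f : Fin d → Fin 2, ‖Phi d c m f‖ ^ 2) = 1 / d ∧
    (UDm d m).mulVec (fun f => (Real.sqrt d : ℂ) * Phi d c m f) =
      fun f => ∑ i : Fin d, if f = bitv d i then c i else 0 :=
  stmt_16_general d c hnorm m
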